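/- Let A be an M × N complex matrix with rows a₁ᴴ, …, a_Mᴴ, all nonzero, let Φ be the M × M real diagonal matrix with Φ_{ii} = 1/‖a_i‖₂², and set M̃ = AᴴΦA. Let b ∈ ℂ^M, let x* satisfy A x* = b, let x ∈ ℂ^N with x ≠ x*, set e = x − x*, and assume Ae ≠ 0. Let φ = Φ(b − Ax) and define x' = x + (φᴴ(b − Ax)/‖Aᴴφ‖₂²)·Aᴴφ. Then the factor α = 1 − (eᴴM̃e)²/(‖M̃e‖₂²·‖e‖₂²) satisfies 0 ≤ α < 1, and ‖x' − x*‖₂² = α·‖e‖₂²; in particular ‖x' − x*‖₂ < ‖x − x*‖₂, so the step strictly contracts the error. -/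

import Mathlib

open Matrix
open scoped BigOperators

noncomputable section

/-- Hermitian inner product aᴴb = ∑ conj(aₙ)·bₙ on complex vectors. -/
def hIP {ι : Type*} [Fintype ι] (a y : ι → ℂ) : ℂ := ∑ n, (starRingEnd ℂ) (a n) * y n

/-- Squared Euclidean norm of a complex vector. -/
def sqNorm {ι : Type*} [Fintype ι] (a : ι → ℂ) : ℝ := ∑ n, Complex.normSq (a n)


abbrev euNorm {n : ℕ} (a : Fin n → ℂ) : ℝ := @norm (EuclideanSpace ℂ (Fin n)) _ (WithLp.toLp 2 a)

lemma hIP_eq_inner {n : ℕ} (a y : Fin n → ℂ) :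
    hIP a y = @inner ℂ (EuclideanSpace ℂ (Fin n)) _ (WithLp.toLp 2 a) (WithLp.toLp 2 y) := by
  simp [hIP, PiLp.inner_apply, RCLike.inner_apply, mul_comm]

lemma sqNorm_eq_norm_sq {n : ℕ} (a : Fin n → ℂ) :
    sqNorm a = euNorm a ^ 2 := by
  rw [euNorm, EuclideanSpace.norm_eq, Real.sq_sqrt (by positivity)]
  simp [sqNorm, Complex.normSq_eq_norm_sq]

lemma sqNorm_nonneg' {ι : Type*} [Fintype ι] (a : ι → ℂ) : 0 ≤ sqNorm a :=
  Finset.sum_nonneg fun _ _ => Complex.normSq_nonneg _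

lemma sqNorm_pos {n : ℕ} {a : Fin n → ℂ} (h : a ≠ 0) : 0 < sqNorm a := by
  rw [sqNorm_eq_norm_sq]
  have h' : euNorm a ≠ 0 := by
    simpa using (norm_ne_zero_iff (a := WithLp.toLp 2 a)).2
      (fun h0 => h (by simpa using congrArg WithLp.ofLp h0))
  positivity

lemma sqNorm_neg {ι : Type*} [Fintype ι] (a : ι → ℂ) : sqNorm (-a) = sqNorm a := by
  simp [sqNorm]

lemma hIP_eq_dot {ι : Type*} [Fintype ι] (a y : ι → ℂ) : hIP a y = star a ⬝ᵥ y := rfl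


/-- The strict contraction α < 1 established in Theorem 5 of the paper (globally
exponential convergence of the VR-OAHK algorithm).  The rows of A are aᵢᴴ, i.e.
aᵢ = star(A i), and Φᵢᵢ = 1/‖aᵢ‖₂². -/
theorem ahk_strict_contraction (M N : ℕ)
    (A : Matrix (Fin M) (Fin N) ℂ)
    (hrows : ∀ i : Fin M, (fun n => (starRingEnd ℂ) (A i n)) ≠ (0 : Fin N → ℂ))
    (b : Fin M → ℂ) (xstar : Fin N → ℂ) (hxs : A.mulVec xstar = b)
    (x : Fin N → ℂ) (hx : x ≠ xstar)
    (Φ : Matrix (Fin M) (Fin M) ℂ)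
    (hΦ : Φ = Matrix.diagonal
      (fun i => (1 : ℂ) / (sqNorm (fun n => (starRingEnd ℂ) (A i n)) : ℂ)))
    (Mt : Matrix (Fin N) (Fin N) ℂ) (hMt : Mt = A.conjTranspose * Φ * A)
    (e : Fin N → ℂ) (he : e = x - xstar)
    (hAe : A.mulVec e ≠ 0)
    (φ : Fin M → ℂ) (hφ : φ = Φ.mulVec (b - A.mulVec x))
    (x' : Fin N → ℂ)
    (hx' : x' = x + ((hIP φ (b - A.mulVec x)) / (sqNorm (A.conjTranspose.mulVec φ) : ℂ))
      • A.conjTranspose.mulVec φ)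
    (α : ℝ)
    (hα : α = 1 - (hIP e (Mt.mulVec e)).re ^ 2 / (sqNorm (Mt.mulVec e) * sqNorm e)) :
    0 ≤ α ∧ α < 1 ∧
    sqNorm (x' - xstar) = α * sqNorm e ∧
    Real.sqrt (sqNorm (x' - xstar)) < Real.sqrt (sqNorm (x - xstar)) := by
  have hres : b - A.mulVec x = -(A.mulVec e) := by
    rw [he, Matrix.mulVec_sub, ← hxs]; abel
  have hΦH : Φ.conjTranspose = Φ := by
    rw [hΦ]
    ext i j
    rcases eq_or_ne i j with rfl | h
    · simp [Matrix.conjTranspose_apply, star_div₀, Complex.conj_ofReal]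
    · simp [Matrix.conjTranspose_apply, Matrix.diagonal_apply_ne _ h,
        Matrix.diagonal_apply_ne _ (Ne.symm h)]
  have hAHφ : A.conjTranspose.mulVec φ = -(Mt.mulVec e) := by
    rw [hφ, hres, hMt]
    simp [Matrix.mulVec_neg, Matrix.mulVec_mulVec, Matrix.mul_assoc]
  set w : Fin M → ℂ := A.mulVec e with hw
  have h1 : hIP e (Mt.mulVec e) = star w ⬝ᵥ Φ.mulVec w := by
    rw [hIP_eq_dot, hMt, hw, Matrix.star_mulVec, ← Matrix.dotProduct_mulVec,
      Matrix.mulVec_mulVec, Matrix.mulVec_mulVec, Matrix.mul_assoc]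
  have h2 : hIP φ (b - A.mulVec x) = star w ⬝ᵥ Φ.mulVec w := by
    rw [hIP_eq_dot, hφ, hres, Matrix.mulVec_neg, star_neg, neg_dotProduct,
      dotProduct_neg, neg_neg, Matrix.star_mulVec, ← Matrix.dotProduct_mulVec, hΦH]
  set r : ℝ := ∑ i, Complex.normSq (w i) / sqNorm (fun n => (starRingEnd ℂ) (A i n)) with hr
  have hval : hIP e (Mt.mulVec e) = (r : ℂ) := by
    rw [h1, hΦ, hr]
    simp only [dotProduct, Matrix.mulVec_diagonal, Pi.star_apply]
    push_cast
    refine Finset.sum_congr rfl fun i _ => ?_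
    rw [Complex.normSq_eq_conj_mul_self]
    simp only [Complex.star_def]
    ring
  have hrpos : 0 < r := by
    rw [hr]
    obtain ⟨i0, hi0⟩ : ∃ i, w i ≠ 0 := by
      by_contra h; push_neg at h; exact hAe (funext h)
    refine Finset.sum_pos' (fun i _ => ?_) ⟨i0, Finset.mem_univ _, ?_⟩
    · exact div_nonneg (Complex.normSq_nonneg _) (sqNorm_nonneg' _)
    · exact div_pos (Complex.normSq_pos.2 hi0) (sqNorm_pos (hrows i0))
  set m : Fin N → ℂ := Mt.mulVec e with hm
  have hmne : m ≠ 0 := by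
    intro h
    have h0 : (r : ℂ) = 0 := by rw [← hval, h]; simp [hIP]
    norm_cast at h0
    rw [h0] at hrpos
    exact lt_irrefl _ hrpos
  have hs : 0 < sqNorm m := sqNorm_pos hmne
  have hene : e ≠ 0 := by rw [he]; exact sub_ne_zero.2 hx
  have hse : 0 < sqNorm e := sqNorm_pos hene
  set s : ℝ := sqNorm m with hsdef
  have hs' : s ≠ 0 := ne_of_gt hs
  have hse' : sqNorm e ≠ 0 := ne_of_gt hse
  have hxe : x' - xstar = e - ((r / s : ℝ) : ℂ) • m := by
    rw [hx', h2, ← h1, hval, hAHφ, sqNorm_neg, hsdef, Complex.ofReal_div, smul_neg, he]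
    abel
  have hinner : (@inner ℂ (EuclideanSpace ℂ (Fin N)) _ (WithLp.toLp 2 e) (WithLp.toLp 2 m)) = (r : ℂ) := by
    rw [← hIP_eq_inner, hm, hval]
  have hCS : r ^ 2 ≤ s * sqNorm e := by
    have h1' : ‖(@inner ℂ (EuclideanSpace ℂ (Fin N)) _ (WithLp.toLp 2 e) (WithLp.toLp 2 m))‖ ≤ euNorm e * euNorm m :=
      norm_inner_le_norm _ _
    rw [hinner] at h1'
    have habs : |r| ≤ euNorm e * euNorm m := by simpa using h1'
    calc r ^ 2 = |r| ^ 2 := by rw [sq_abs]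
      _ ≤ (euNorm e * euNorm m) ^ 2 := by
          apply pow_le_pow_left₀ (abs_nonneg r) habs
      _ = s * sqNorm e := by rw [hsdef, sqNorm_eq_norm_sq e, sqNorm_eq_norm_sq m]; ring
  have hmain : sqNorm (x' - xstar) = sqNorm e - r ^ 2 / s := by
    have hns := norm_sub_sq (𝕜 := ℂ) (E := EuclideanSpace ℂ (Fin N)) (WithLp.toLp 2 e) (((r / s : ℝ) : ℂ) • WithLp.toLp 2 m)
    rw [show (WithLp.toLp 2 e - ((r / s : ℝ) : ℂ) • WithLp.toLp 2 m : EuclideanSpace ℂ (Fin N))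
        = WithLp.toLp 2 (e - ((r / s : ℝ) : ℂ) • m : Fin N → ℂ) from rfl] at hns
    rw [hxe, sqNorm_eq_norm_sq, hns, inner_smul_right, hinner, norm_smul]
    have hre : RCLike.re (((r / s : ℝ) : ℂ) * (r : ℂ)) = r / s * r := by
      rw [← Complex.ofReal_mul]; simp
    rw [hre]
    have hnc : ‖((r / s : ℝ) : ℂ)‖ = r / s := by
      rw [Complex.norm_real, Real.norm_eq_abs, abs_of_nonneg (div_nonneg hrpos.le hs.le)]
    rw [hnc, mul_pow]
    have hm2 : euNorm m ^ 2 = s := (sqNorm_eq_norm_sq m).symm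
    rw [hm2, sqNorm_eq_norm_sq e]
    field_simp
    ring
  have hαval : α = 1 - r ^ 2 / (s * sqNorm e) := by
    rw [hα, hval, Complex.ofReal_re]
  have hprod : 0 < s * sqNorm e := mul_pos hs hse
  have hα0 : 0 ≤ α := by
    rw [hαval]
    have h3 : r ^ 2 / (s * sqNorm e) ≤ 1 := (div_le_one hprod).2 hCS
    linarith
  have hα1 : α < 1 := by
    rw [hαval]
    have h4 : 0 < r ^ 2 / (s * sqNorm e) := div_pos (by positivity) hprod
    linarith
  have heq : sqNorm (x' - xstar) = α * sqNorm e := by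
    rw [hmain, hαval]
    field_simp
  refine ⟨hα0, hα1, heq, ?_⟩
  have hxx : sqNorm (x - xstar) = sqNorm e := by rw [he]
  rw [hxx, heq]
  apply Real.sqrt_lt_sqrt (by positivity)
  calc α * sqNorm e < 1 * sqNorm e := mul_lt_mul_of_pos_right hα1 hse
    _ = sqNorm e := one_mul _
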